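/- arXiv:2112.12977 — 2 statements merged into one kernel-verified Lean document; each statement's English description precedes it below -/
import Mathlib

section
/- Let T be a resolving subcategory of an abelian category A with enough projectives. In any short exact sequence in A, if two of the three terms have finite T-projective dimension, then so does the third. -/
open CategoryTheory

universe v u

namespace RelHomDim

variable {C : Type u} [Category.{v} C] [Abelian C]

/-- A (full, additive, iso-closed) subcategory, given as a predicate on objects,
is *resolving* if it contains all projective objects, is closed under extensions,
kernels of epimorphisms, and direct summands (retracts). -/
def IsResolving (T : C → Prop) : Prop :=
  (∀ X Y : C, (X ≅ Y) → T X → T Y) ∧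
  (∀ P : C, Projective P → T P) ∧
  (∀ S : ShortComplex C, S.ShortExact → T S.X₁ → T S.X₃ → T S.X₂) ∧
  (∀ S : ShortComplex C, S.ShortExact → T S.X₂ → T S.X₃ → T S.X₁) ∧
  (∀ X Y : C, T (X ⊞ Y) → T X)

/-- `pdLE T n M` means that `M` admits a resolution
`0 → Xₙ → ⋯ → X₁ → X₀ → M → 0` with all `Xᵢ` in `T`, i.e. the `T`-projective
dimension of `M` is at most `n`. -/
def pdLE (T : C → Prop) : ℕ → C → Prop
  | 0, M => T M
  | n + 1, M => ∃ S : ShortComplex C, S.ShortExact ∧ Nonempty (S.X₃ ≅ M) ∧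
      T S.X₂ ∧ pdLE T n S.X₁

/-- The `T`-projective dimension of `M`, as an element of `ℕ∞` (`⊤` if `M` has no
finite resolution by objects of `T`). -/
noncomputable def pd (T : C → Prop) (M : C) : ℕ∞ :=
  sInf {n : ℕ∞ | ∃ k : ℕ, n = (k : ℕ∞) ∧ pdLE T k M}

end RelHomDim


namespace RelHomDim

open CategoryTheory.Limits ZeroObject

variable {C : Type u} [Category.{v} C] [Abelian C] {T : C → Prop}

lemma pdLE_iso (hT : IsResolving T) {M N : C} (e : M ≅ N) {n : ℕ}
    (h : pdLE T n M) : pdLE T n N := by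
  match n, h with
  | 0, h => exact hT.1 M N e h
  | n+1, ⟨S, hS, ⟨e'⟩, h2, h1⟩ => exact ⟨S, hS, ⟨e'.trans e⟩, h2, h1⟩

lemma pdLE_succ (hT : IsResolving T) {M : C} {n : ℕ} (h : pdLE T n M) :
    pdLE T (n+1) M := by
  induction n generalizing M with
  | zero =>
    refine ⟨ShortComplex.mk (0 : (0 : C) ⟶ M) (𝟙 M) (by simp), ?_, ⟨Iso.refl M⟩, h,
      hT.2.1 _ inferInstance⟩
    refine ShortComplex.ShortExact.mk' ?_ ?_ inferInstance
    · rw [ShortComplex.exact_iff_mono _ rfl]; infer_instance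
    · exact ⟨fun g h _ => (Limits.isZero_zero C).eq_of_tgt g h⟩
  | succ n ih =>
    obtain ⟨S, hS, e, h2, h1⟩ := h
    exact ⟨S, hS, e, h2, ih h1⟩

lemma pdLE_le (hT : IsResolving T) {M : C} {m n : ℕ} (h : m ≤ n)
    (hm : pdLE T m M) : pdLE T n M := by
  induction h with
  | refl => exact hm
  | step _ ih => exact pdLE_succ hT ih

lemma pdLE_of_T (hT : IsResolving T) {M : C} (h : T M) (n : ℕ) : pdLE T n M :=
  pdLE_le hT (Nat.zero_le n) h

lemma kernelSES {P X : C} (p : P ⟶ X) [Epi p] :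
    (ShortComplex.mk (kernel.ι p) p (kernel.condition p)).ShortExact :=
  ShortComplex.ShortExact.mk'
    (ShortComplex.exact_of_f_is_kernel _ (kernelIsKernel p)) inferInstance inferInstance

lemma pullback_ses₁ {S : ShortComplex C} (hS : S.ShortExact) {B : C} (b : B ⟶ S.X₃) :
    (ShortComplex.mk
      (pullback.lift S.f (0 : S.X₁ ⟶ B) (by simp [S.zero]))
      (pullback.snd S.g b) (pullback.lift_snd _ _ _)).ShortExact := by
  have := hS.mono_f
  have := hS.epi_g
  refine ShortComplex.ShortExact.mk' ?_ (mono_of_mono_fac (pullback.lift_fst _ _ _)) ?_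
  · apply ShortComplex.exact_of_f_is_kernel
    refine KernelFork.IsLimit.ofι' _ _ (fun {A} k hk => ?_)
      (hi := mono_of_mono_fac (pullback.lift_fst _ _ _))
    have hk' : (k ≫ pullback.fst S.g b) ≫ S.g = 0 := by
      rw [Category.assoc, pullback.condition, ← Category.assoc, hk, zero_comp]
    refine ⟨hS.exact.lift (k ≫ pullback.fst S.g b) hk', ?_⟩
    apply pullback.hom_ext
    · simpa [pullback.lift_fst] using hS.exact.lift_f _ hk'
    · simpa [pullback.lift_fst, pullback.lift_snd] using hk.symm
  · exact Abelian.epi_pullback_of_epi_f _ _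

lemma pullback_ses₂ {S : ShortComplex C} (hS : S.ShortExact) {B : C} (b : B ⟶ S.X₃) [Epi b] :
    (ShortComplex.mk
      (pullback.lift (0 : kernel b ⟶ S.X₂) (kernel.ι b) (by simp))
      (pullback.fst S.g b) (pullback.lift_fst _ _ _)).ShortExact := by
  refine ShortComplex.ShortExact.mk' ?_ (mono_of_mono_fac (pullback.lift_snd _ _ _)) ?_
  · apply ShortComplex.exact_of_f_is_kernel
    refine KernelFork.IsLimit.ofι' _ _ (fun {A} k hk => ?_)
      (hi := mono_of_mono_fac (pullback.lift_snd _ _ _))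
    have hk' : (k ≫ pullback.snd S.g b) ≫ b = 0 := by
      rw [Category.assoc, ← pullback.condition, ← Category.assoc, hk, zero_comp]
    refine ⟨kernel.lift b (k ≫ pullback.snd S.g b) hk', ?_⟩
    apply pullback.hom_ext
    · simpa [pullback.lift_fst, pullback.lift_snd] using hk.symm
    · simpa [pullback.lift_snd] using (kernel.lift_ι b _ hk')
  · exact Abelian.epi_pullback_of_epi_g _ _

lemma pullback_comp_ses {S : ShortComplex C} (hS : S.ShortExact) {P : C} (p : P ⟶ S.X₂) [Epi p] :
    (ShortComplex.mk (pullback.fst p S.f) (p ≫ S.g)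
      (by rw [← Category.assoc, pullback.condition, Category.assoc, S.zero, comp_zero])).ShortExact := by
  have := hS.mono_f
  have := hS.epi_g
  refine ShortComplex.ShortExact.mk' ?_ inferInstance (epi_comp _ _)
  apply ShortComplex.exact_of_f_is_kernel
  refine KernelFork.IsLimit.ofι' _ _ (fun {A} k hk => ?_)
  have hk' : (k ≫ p) ≫ S.g = 0 := by rw [Category.assoc, hk]
  refine ⟨pullback.lift k (hS.exact.lift (k ≫ p) hk') (by rw [hS.exact.lift_f]), ?_⟩
  exact pullback.lift_fst _ _ _

end RelHomDim

namespace RelHomDim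

open CategoryTheory.Limits

variable {C : Type u} [Category.{v} C] [Abelian C] {T : C → Prop}

/-- `S.X₁` is isomorphic to the kernel of `S.g` composed with an iso. -/
noncomputable def kernelCompIso {Z : C} (S : ShortComplex C) (hS : S.ShortExact)
    (e : S.X₃ ≅ Z) : S.X₁ ≅ kernel (S.g ≫ e.hom) := by
  have := hS.mono_f
  have := hS.epi_g
  exact IsLimit.conePointUniqueUpToIso
    (isKernelCompMono hS.fIsKernel e.hom rfl) (limit.isLimit _)

lemma S2a (hT : IsResolving T) : ∀ (n : ℕ) (S : ShortComplex C), S.ShortExact →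
    T S.X₃ → pdLE T n S.X₂ → pdLE T n S.X₁ := by
  intro n S hS h3 h2
  match n, h2 with
  | 0, h2 => exact hT.2.2.2.1 S hS h2 h3
  | n+1, ⟨S', hS', ⟨e⟩, hB, hA⟩ =>
    have hep : Epi (S'.g ≫ e.hom) := by have := hS'.epi_g; exact epi_comp _ _
    have hSES : (ShortComplex.mk S'.f (S'.g ≫ e.hom)
        (by rw [← Category.assoc, S'.zero, zero_comp])).ShortExact := by
      refine ShortComplex.shortExact_of_iso ?_ hS'
      exact ShortComplex.isoMk (Iso.refl _) (Iso.refl _) e (by simp) (by simp)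
    have h1 := pullback_ses₁ hSES S.f
    have h2' := pullback_comp_ses hS (S'.g ≫ e.hom)
    exact ⟨_, h1, ⟨Iso.refl _⟩, hT.2.2.2.1 _ h2' hB h3, hA⟩

lemma schanuel (hT : IsResolving T) {n : ℕ}
    (h1 : ∀ S : ShortComplex C, S.ShortExact → pdLE T n S.X₁ → pdLE T n S.X₃ → pdLE T n S.X₂)
    (Sa Sb : ShortComplex C) (ha : Sa.ShortExact) (hb : Sb.ShortExact)
    (e : Sb.X₃ ≅ Sa.X₃) (hXa : T Sa.X₂) (hXb : T Sb.X₂)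
    (hK : pdLE T n Sa.X₁) : pdLE T n Sb.X₁ := by
  have hebg : Epi (Sb.g ≫ e.hom) := by have := hb.epi_g; exact epi_comp _ _
  have hb1 := pullback_ses₁ ha (Sb.g ≫ e.hom)
  have hb2 := pullback_ses₂ ha (Sb.g ≫ e.hom)
  have hE : pdLE T n (pullback Sa.g (Sb.g ≫ e.hom)) :=
    h1 _ hb1 hK (pdLE_of_T hT hXb n)
  have hker := S2a hT n _ hb2 hXa hE
  exact pdLE_iso hT (kernelCompIso Sb hb e).symm hker

lemma shift (hT : IsResolving T) {n : ℕ}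
    (h1 : ∀ S : ShortComplex C, S.ShortExact → pdLE T n S.X₁ → pdLE T n S.X₃ → pdLE T n S.X₂)
    {M : C} (hM : pdLE T (n+1) M)
    (Sb : ShortComplex C) (hb : Sb.ShortExact) (e : Sb.X₃ ≅ M) (hX : T Sb.X₂) :
    pdLE T n Sb.X₁ := by
  obtain ⟨Sa, ha, ⟨ea⟩, hXa, hK⟩ := hM
  exact schanuel hT h1 Sa Sb ha hb (e.trans ea.symm) hXa hX hK

lemma S2' (hT : IsResolving T) {n : ℕ}
    (h1 : ∀ S : ShortComplex C, S.ShortExact → pdLE T n S.X₁ → pdLE T n S.X₃ → pdLE T n S.X₂)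
    (S : ShortComplex C) (hS : S.ShortExact)
    (h2 : pdLE T n S.X₂) (h3 : pdLE T (n+1) S.X₃) : pdLE T n S.X₁ := by
  obtain ⟨S', hS', ⟨e⟩, hB, hA⟩ := h3
  have hebg : Epi (S'.g ≫ e.hom) := by have := hS'.epi_g; exact epi_comp _ _
  have hb1 := pullback_ses₁ hS (S'.g ≫ e.hom)
  have hb2 := pullback_ses₂ hS (S'.g ≫ e.hom)
  have hker : pdLE T n (kernel (S'.g ≫ e.hom)) :=
    pdLE_iso hT (kernelCompIso S' hS' e) hA
  have hE : pdLE T n (pullback S.g (S'.g ≫ e.hom)) := h1 _ hb2 hker h2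
  have := S2a hT n _ hb1 hB hE
  exact this

lemma S1 (hT : IsResolving T) [EnoughProjectives C] :
    ∀ (n : ℕ) (S : ShortComplex C), S.ShortExact →
      pdLE T n S.X₁ → pdLE T n S.X₃ → pdLE T n S.X₂ := by
  intro n
  induction n with
  | zero => exact fun S hS => hT.2.2.1 S hS
  | succ n ih =>
    intro S hS h1 h3
    have := hS.mono_f
    have hkp := kernelSES (Projective.π S.X₂)
    have hE3 := pullback_comp_ses hS (Projective.π S.X₂)
    have hE : pdLE T n (pullback (Projective.π S.X₂) S.f) :=
      shift hT ih h3 _ hE3 (Iso.refl _) (hT.2.1 _ (Projective.projective_over _))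
    have hKE := pullback_ses₁ hkp S.f
    have hK : pdLE T n (kernel (Projective.π S.X₂)) := S2' hT ih _ hKE hE h1
    exact ⟨_, hkp, ⟨Iso.refl _⟩, hT.2.1 _ (Projective.projective_over _), hK⟩

lemma S2 (hT : IsResolving T) [EnoughProjectives C] (n : ℕ)
    (S : ShortComplex C) (hS : S.ShortExact)
    (h2 : pdLE T n S.X₂) (h3 : pdLE T (n+1) S.X₃) : pdLE T n S.X₁ :=
  S2' hT (S1 hT n) S hS h2 h3

lemma S3 (hT : IsResolving T) [EnoughProjectives C] (n : ℕ)
    (S : ShortComplex C) (hS : S.ShortExact)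
    (h1 : pdLE T n S.X₁) (h2 : pdLE T n S.X₂) : pdLE T (n+1) S.X₃ := by
  have := hS.mono_f
  have hkp := kernelSES (Projective.π S.X₂)
  have hKE := pullback_ses₁ hkp S.f
  have hE3 := pullback_comp_ses hS (Projective.π S.X₂)
  have hK : pdLE T n (kernel (Projective.π S.X₂)) :=
    shift hT (S1 hT n) (pdLE_succ hT h2) _ hkp (Iso.refl _)
      (hT.2.1 _ (Projective.projective_over _))
  have hE : pdLE T n (pullback (Projective.π S.X₂) S.f) := S1 hT n _ hKE hK h1
  exact ⟨_, hE3, ⟨Iso.refl _⟩, hT.2.1 _ (Projective.projective_over _), hE⟩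

lemma pd_ne_top_iff {M : C} : pd T M ≠ ⊤ ↔ ∃ k : ℕ, pdLE T k M := by
  constructor
  · intro h
    by_contra h'
    push_neg at h'
    apply h
    rw [pd]
    refine (congrArg sInf ?_).trans sInf_empty
    ext n
    simp only [Set.mem_setOf_eq, Set.mem_empty_iff_false, iff_false, not_exists]
    rintro k ⟨rfl, hk⟩
    exact h' k hk
  · rintro ⟨k, hk⟩ h
    have hle : pd T M ≤ (k : ℕ∞) := sInf_le ⟨k, rfl, hk⟩
    rw [h] at hle
    exact WithTop.natCast_ne_top k (top_le_iff.mp hle)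

end RelHomDim

open RelHomDim in
/-- Two-out-of-three: in a short exact sequence, if two of the three terms have
finite `T`-projective dimension, then so does the third. -/
theorem pd_finite_two_out_of_three {C : Type u} [Category.{v} C] [Abelian C]
    [EnoughProjectives C] (T : C → Prop) (hT : IsResolving T)
    (S : ShortComplex C) (hS : S.ShortExact) :
    (pd T S.X₁ ≠ ⊤ → pd T S.X₂ ≠ ⊤ → pd T S.X₃ ≠ ⊤) ∧
    (pd T S.X₁ ≠ ⊤ → pd T S.X₃ ≠ ⊤ → pd T S.X₂ ≠ ⊤) ∧
    (pd T S.X₂ ≠ ⊤ → pd T S.X₃ ≠ ⊤ → pd T S.X₁ ≠ ⊤) := by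
  refine ⟨?_, ?_, ?_⟩
  · intro hA hB
    rw [pd_ne_top_iff] at hA hB ⊢
    obtain ⟨k₁, hk₁⟩ := hA
    obtain ⟨k₂, hk₂⟩ := hB
    exact ⟨max k₁ k₂ + 1, S3 hT _ S hS (pdLE_le hT (le_max_left _ _) hk₁)
      (pdLE_le hT (le_max_right _ _) hk₂)⟩
  · intro hA hB
    rw [pd_ne_top_iff] at hA hB ⊢
    obtain ⟨k₁, hk₁⟩ := hA
    obtain ⟨k₃, hk₃⟩ := hB
    exact ⟨max k₁ k₃, S1 hT _ S hS (pdLE_le hT (le_max_left _ _) hk₁)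
      (pdLE_le hT (le_max_right _ _) hk₃)⟩
  · intro hA hB
    rw [pd_ne_top_iff] at hA hB ⊢
    obtain ⟨k₂, hk₂⟩ := hA
    obtain ⟨k₃, hk₃⟩ := hB
    exact ⟨max k₂ k₃, S2 hT _ S hS (pdLE_le hT (le_max_left _ _) hk₂)
      (pdLE_le hT ((le_max_right _ _).trans (Nat.le_succ _)) hk₃)⟩
end

section
/- Let A be an abelian category with enough projectives, T a resolving subcategory, M an object, and n ≥ 0. Then T-pd M ≤ n if and only if for every exact sequence 0 → Kₙ → P_{n−1} → ⋯ → P₀ → M → 0 with all Pᵢ projective, one has Kₙ ∈ T. -/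
open CategoryTheory

universe v u

namespace RelHomDim

variable {C : Type u} [Category.{v} C] [Abelian C]

/-- `isSyzygyOfLength Q n K M` means there is an exact sequence
`0 → K → X_{n-1} → ⋯ → X₀ → M → 0` where all the middle terms `Xᵢ` satisfy `Q`
(for `n = 0` this just means `K ≅ M`). -/
def isSyzygyOfLength (Q : C → Prop) : ℕ → C → C → Prop
  | 0, K, M => Nonempty (K ≅ M)
  | n + 1, K, M => ∃ S : ShortComplex C, S.ShortExact ∧ Nonempty (S.X₃ ≅ M) ∧
      Q S.X₂ ∧ isSyzygyOfLength Q n K S.X₁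

end RelHomDim

namespace RelHomDimAux

open RelHomDim CategoryTheory.Limits ZeroObject CategoryTheory.Abelian
open Pseudoelement CategoryTheory.Abelian.Pseudoelement

variable {C : Type u} [Category.{v} C] [Abelian C] {T : C → Prop}

/-- kernel sequence of an epi is short exact -/
lemma kerSE {N X : C} (g : N ⟶ X) [Epi g] :
    (ShortComplex.mk (kernel.ι g) g (kernel.condition g)).ShortExact where
  exact := ShortComplex.exact_kernel g
  mono_f := inferInstance
  epi_g := ‹_›

/-- biprod sequence is short exact -/
lemma biprodSE (X Y : C) :
    (ShortComplex.mk (biprod.inl : X ⟶ X ⊞ Y) (biprod.snd : X ⊞ Y ⟶ Y) (by simp)).ShortExact :=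
  (ShortComplex.Splitting.ofHasBinaryBiproduct X Y).shortExact

/-- the sequence 0 → 0 → M → M → 0 is short exact -/
lemma zeroSE (M : C) :
    (ShortComplex.mk (0 : (0 : C) ⟶ M) (𝟙 M) (by simp)).ShortExact :=
  (ShortComplex.Splitting.ofIsZeroOfIsIso _ (isZero_zero C) (by dsimp; infer_instance)).shortExact

lemma epi_biprod_map {Z L : C} (P : C) (g : Z ⟶ L) [Epi g] :
    Epi (biprod.map g (𝟙 P)) := by
  constructor
  intro W x y h
  apply biprod.hom_ext'
  · rw [← cancel_epi g]
    have h1 := biprod.inl ≫= h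
    simpa using h1
  · have h2 := biprod.inr ≫= h
    simpa using h2

/-- a short exact sequence can be extended by a biproduct summand -/
lemma biprodMapSE (S : ShortComplex C) (hS : S.ShortExact) (P : C) :
    (ShortComplex.mk (S.f ≫ biprod.inl : S.X₁ ⟶ S.X₂ ⊞ P) (biprod.map S.g (𝟙 P))
      (by rw [Category.assoc, biprod.inl_map, ← Category.assoc, S.zero, zero_comp])).ShortExact := by
  have := hS.mono_f
  have := hS.epi_g
  have hmono : Mono (S.f ≫ (biprod.inl : S.X₂ ⟶ S.X₂ ⊞ P)) := mono_comp _ _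
  refine ShortComplex.ShortExact.mk' ?_ hmono (epi_biprod_map P S.g)
  apply ShortComplex.exact_of_f_is_kernel
  apply KernelFork.IsLimit.ofι'
  intro A k hk
  have hsnd : k ≫ biprod.snd = 0 := by
    have := k ≫= (biprod.map_snd S.g (𝟙 P))
    rw [← Category.assoc, hk, zero_comp] at this
    simpa using this.symm
  have hfst : (k ≫ biprod.fst) ≫ S.g = 0 := by
    have := k ≫= (biprod.map_fst S.g (𝟙 P))
    rw [← Category.assoc, hk, zero_comp] at this
    rw [Category.assoc, ← this]
  obtain ⟨l, hl⟩ := KernelFork.IsLimit.lift' hS.fIsKernel _ hfst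
  refine ⟨l, ?_⟩
  dsimp at hl ⊢
  ext
  · simpa using hl
  · simpa using hsnd.symm

/-- the sequence `ker b → pullback a b → X` is short exact, given a presentation of
`ker b` as a kernel fork -/
lemma pbSE {X P M K : C} (a : X ⟶ M) (b : P ⟶ M) [Epi b] {i : K ⟶ P} [Mono i] {w : i ≫ b = 0}
    (hk : IsLimit (KernelFork.ofι i w)) :
    (ShortComplex.mk (pullback.lift 0 i (by rw [zero_comp, w])) (pullback.fst a b)
      (pullback.lift_fst _ _ _)).ShortExact := by
  haveI hmono : Mono ((pullback.lift 0 i (by rw [zero_comp, w]) : K ⟶ pullback a b)) :=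
    mono_of_mono_fac (pullback.lift_snd _ _ _)
  refine ShortComplex.ShortExact.mk' ?_ hmono inferInstance
  apply ShortComplex.exact_of_f_is_kernel
  apply KernelFork.IsLimit.ofι'
  intro A k hkf
  have hc : (k ≫ pullback.snd a b) ≫ b = 0 := by
    rw [Category.assoc, ← pullback.condition, ← Category.assoc, hkf, zero_comp]
  obtain ⟨l, hl⟩ := KernelFork.IsLimit.lift' hk _ hc
  refine ⟨l, ?_⟩
  apply pullback.hom_ext
  · rw [Category.assoc, pullback.lift_fst, comp_zero]; exact hkf.symm
  · rw [Category.assoc, pullback.lift_snd]; exact hl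

lemma pdLE_iso (hT : IsResolving T) :
    ∀ (n : ℕ) {M N : C}, pdLE T n M → (M ≅ N) → pdLE T n N
  | 0, M, N, h, e => hT.1 M N e h
  | n+1, _, _, ⟨S, hS, ⟨e'⟩, h2, h1⟩, e => ⟨S, hS, ⟨e' ≪≫ e⟩, h2, h1⟩

lemma T_zero (hT : IsResolving T) : T (0 : C) :=
  hT.2.1 0 inferInstance

lemma pdLE_succ (hT : IsResolving T) :
    ∀ (n : ℕ) {M : C}, pdLE T n M → pdLE T (n+1) M
  | 0, M, h => ⟨ShortComplex.mk (0 : (0 : C) ⟶ M) (𝟙 M) (by simp), zeroSE M,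
      ⟨Iso.refl M⟩, h, T_zero hT⟩
  | n+1, _, ⟨S, hS, e, h2, h1⟩ => ⟨S, hS, e, h2, pdLE_succ hT n h1⟩

lemma pdLE_of_le (hT : IsResolving T) {M : C} {k n : ℕ} (hkn : k ≤ n) (h : pdLE T k M) :
    pdLE T n M := by
  induction hkn with
  | refl => exact h
  | step _ ih => exact pdLE_succ hT _ ih

lemma pdLE_biprod (hT : IsResolving T) :
    ∀ (n : ℕ) {L : C} {P : C}, pdLE T n L → T P → pdLE T n (L ⊞ P)
  | 0, L, P, hL, hP => hT.2.2.1 _ (biprodSE L P) hL hP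
  | n+1, L, P, ⟨S, hS, ⟨e⟩, h2, h1⟩, hP =>
      ⟨_, biprodMapSE S hS P, ⟨biprod.mapIso e (Iso.refl P)⟩,
        hT.2.2.1 (ShortComplex.mk (biprod.inl : S.X₂ ⟶ S.X₂ ⊞ P) biprod.snd (by simp))
          (biprodSE S.X₂ P) h2 hP, h1⟩

lemma pdLE_ker (hT : IsResolving T) :
    ∀ (n : ℕ) (S : ShortComplex C), S.ShortExact → T S.X₃ → pdLE T n S.X₂ → pdLE T n S.X₁
  | 0, S, hS, h3, h2 => hT.2.2.2.1 S hS h2 h3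
  | n+1, S, hS, h3, ⟨S₂, hS₂, ⟨e⟩, hTW, h1⟩ => by
    haveI := hS.mono_f
    haveI := hS.epi_g
    haveI := hS₂.mono_f
    haveI := hS₂.epi_g
    -- `p : S₂.X₂ ⟶ S.X₂` is an epi presentation of `S.X₂` with kernel `S₂.X₁`
    set p : S₂.X₂ ⟶ S.X₂ := S₂.g ≫ e.hom with hp
    haveI : Epi p := epi_comp _ _
    have hz : S₂.f ≫ p = 0 := by rw [hp, ← Category.assoc, S₂.zero, zero_comp]
    have SE2' : (ShortComplex.mk S₂.f p hz).ShortExact := by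
      refine ShortComplex.ShortExact.mk' ?_ hS₂.mono_f (epi_comp _ _)
      apply exact_of_pseudo_exact
      intro b hb
      have hb' : S₂.g b = 0 := by
        apply pseudo_injective_of_mono e.hom
        rw [← Pseudoelement.comp_apply, ← hp, hb, Pseudoelement.apply_zero]
      exact pseudo_exact_of_exact hS₂.exact b hb'
    set g2 : S₂.X₂ ⟶ S.X₃ := p ≫ S.g with hg2
    haveI : Epi g2 := epi_comp _ _
    have hTV : T (kernel g2) :=
      hT.2.2.2.1 _ (kerSE g2) hTW h3
    set i : S₂.X₁ ⟶ kernel g2 :=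
      kernel.lift g2 S₂.f (by rw [hg2, ← Category.assoc, hz, zero_comp]) with hi
    obtain ⟨q, hq⟩ := KernelFork.IsLimit.lift' hS.fIsKernel (kernel.ι g2 ≫ p)
      (by rw [Category.assoc]; exact kernel.condition g2)
    have hq' : q ≫ S.f = kernel.ι g2 ≫ p := hq
    have hiq : i ≫ q = 0 := by
      rw [← cancel_mono S.f, Category.assoc, hq', zero_comp, ← Category.assoc, hi,
        kernel.lift_ι, hz]
    haveI hmono : Mono i := mono_of_mono_fac (kernel.lift_ι _ _ _)
    have hepi : Epi q := by
      apply epi_of_pseudo_surjective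
      intro k
      obtain ⟨w, hw⟩ := pseudo_surjective_of_epi p (S.f k)
      have hw0 : g2 w = 0 := by
        rw [hg2, Pseudoelement.comp_apply, hw, ← Pseudoelement.comp_apply, S.zero,
          Pseudoelement.zero_apply]
      obtain ⟨v, hv⟩ := pseudo_exact_of_exact (ShortComplex.exact_kernel g2) w hw0
      refine ⟨v, pseudo_injective_of_mono S.f ?_⟩
      rw [← Pseudoelement.comp_apply, hq', Pseudoelement.comp_apply, hv, hw]
    have hex : (ShortComplex.mk i q hiq).Exact := by
      apply exact_of_pseudo_exact
      intro b hb
      have h1' : p ((kernel.ι g2) b) = 0 := by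
        rw [← Pseudoelement.comp_apply, ← hq', Pseudoelement.comp_apply, hb,
          Pseudoelement.apply_zero]
      obtain ⟨a, ha⟩ := pseudo_exact_of_exact SE2'.exact ((kernel.ι g2) b) h1'
      refine ⟨a, pseudo_injective_of_mono (kernel.ι g2) ?_⟩
      have hil : i ≫ kernel.ι g2 = S₂.f := kernel.lift_ι _ _ _
      show pseudoApply (kernel.ι g2) (pseudoApply i a) = pseudoApply (kernel.ι g2) b
      rw [← Pseudoelement.comp_apply, hil]
      exact ha
    exact ⟨ShortComplex.mk i q hiq, ShortComplex.ShortExact.mk' hex hmono hepi,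
      ⟨Iso.refl S.X₁⟩, hTV, h1⟩

lemma pdLE_step (hT : IsResolving T) {M : C} {n : ℕ} (h : pdLE T (n+1) M)
    (S' : ShortComplex C) (hS' : S'.ShortExact) (e' : S'.X₃ ≅ M) (hP : Projective S'.X₂) :
    pdLE T n S'.X₁ := by
  obtain ⟨S₁, hS₁, ⟨e₁⟩, hX, hL⟩ := h
  haveI := hS₁.mono_f
  haveI := hS₁.epi_g
  haveI := hS'.mono_f
  haveI := hS'.epi_g
  set a : S₁.X₂ ⟶ S'.X₃ := S₁.g ≫ (e₁.hom ≫ e'.inv) with ha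
  haveI : Epi a := epi_comp _ _
  have wa : S₁.f ≫ a = 0 := by rw [ha, ← Category.assoc, S₁.zero, zero_comp]
  have hka : IsLimit (KernelFork.ofι S₁.f wa) := by
    apply KernelFork.IsLimit.ofι'
    intro A k hk
    have hk' : k ≫ S₁.g = 0 := by
      rw [← cancel_mono (e₁.hom ≫ e'.inv), Category.assoc, zero_comp, ← ha, hk]
    exact KernelFork.IsLimit.lift' hS₁.fIsKernel k hk'
  -- first pullback sequence : `S₁.X₁ → pullback S'.g a → S'.X₂` splits since `S'.X₂` is projective
  have SE1 := pbSE S'.g a hka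
  haveI : Projective (ShortComplex.mk
      (pullback.lift 0 S₁.f (by rw [zero_comp, wa]) : S₁.X₁ ⟶ pullback S'.g a)
      (pullback.fst S'.g a) (pullback.lift_fst _ _ _)).X₃ := hP
  have eY : pullback S'.g a ≅ S₁.X₁ ⊞ S'.X₂ :=
    (SE1.splittingOfProjective).isoBinaryBiproduct
  have hY1 : pdLE T n (pullback S'.g a) :=
    pdLE_iso hT n (pdLE_biprod hT n hL (hT.2.1 _ hP)) eY.symm
  have hY2 : pdLE T n (pullback a S'.g) :=
    pdLE_iso hT n hY1 (pullbackSymmetry S'.g a)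
  -- second pullback sequence : `S'.X₁ → pullback a S'.g → S₁.X₂`
  have SE2 := pbSE a S'.g hS'.fIsKernel
  have := pdLE_ker hT n _ SE2 hX hY2
  exact this

lemma syzygy_mem (hT : IsResolving T) :
    ∀ (n : ℕ) {M K : C}, pdLE T n M →
      isSyzygyOfLength (fun P => Projective P) n K M → T K
  | 0, M, K, h, ⟨e⟩ => hT.1 M K e.symm h
  | n+1, _, _, h, ⟨S', hS', ⟨e'⟩, hP, hsyz⟩ =>
      syzygy_mem hT n (pdLE_step hT h S' hS' e' hP) hsyz

lemma exists_syzygy [EnoughProjectives C] :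
    ∀ (n : ℕ) (M : C), ∃ K : C, isSyzygyOfLength (fun P => Projective P) n K M
  | 0, M => ⟨M, ⟨Iso.refl M⟩⟩
  | n+1, M => by
    obtain ⟨K, hK⟩ := exists_syzygy n (kernel (Projective.π M))
    exact ⟨K, ShortComplex.mk (kernel.ι (Projective.π M)) (Projective.π M)
        (kernel.condition _), kerSE _, ⟨Iso.refl M⟩, Projective.projective_over M, hK⟩

lemma pdLE_of_syzygy (hT : IsResolving T) :
    ∀ (n : ℕ) {K M : C}, isSyzygyOfLength (fun P => Projective P) n K M → T K → pdLE T n M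
  | 0, K, M, ⟨e⟩, h => hT.1 K M e h
  | n+1, _, _, ⟨S', hS', e', hP, hsyz⟩, h =>
      ⟨S', hS', e', hT.2.1 _ hP, pdLE_of_syzygy hT n hsyz h⟩

end RelHomDimAux

open RelHomDim in
/-- For `T` resolving in an abelian category with enough projectives:
`T-pd M ≤ n` iff for every exact sequence `0 → Kₙ → P_{n-1} → ⋯ → P₀ → M → 0`
with all `Pᵢ` projective, one has `Kₙ ∈ T`. -/
theorem pd_le_iff_syzygy_mem {C : Type u} [Category.{v} C] [Abelian C]
    [EnoughProjectives C] (T : C → Prop) (hT : IsResolving T)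
    (M : C) (n : ℕ) :
    pd T M ≤ (n : ℕ∞) ↔
      ∀ K : C, isSyzygyOfLength (fun P => Projective P) n K M → T K := by
  constructor
  · intro h K hK
    rcases Set.eq_empty_or_nonempty {x : ℕ∞ | ∃ k : ℕ, x = (k : ℕ∞) ∧ pdLE T k M} with he | hne
    · rw [pd, he, sInf_empty] at h
      exact absurd (top_le_iff.mp h) (WithTop.coe_ne_top (a := n))
    · have hmem := csInf_mem hne
      obtain ⟨k, hk, hpd⟩ := hmem
      have hkn : (k : ℕ∞) ≤ (n : ℕ∞) := hk ▸ h
      have : k ≤ n := by exact_mod_cast hkn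
      exact RelHomDimAux.syzygy_mem hT n (RelHomDimAux.pdLE_of_le hT this hpd) hK
  · intro h
    obtain ⟨K, hK⟩ := RelHomDimAux.exists_syzygy n M
    exact sInf_le ⟨n, rfl, RelHomDimAux.pdLE_of_syzygy hT n hK (h K hK)⟩
end
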